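/- Let (A,B) ∈ MC₂ be a pair of multiplicative complements such that the series ∑_{b ∈ B} 1/b converges. Then A(x) is not o(x), i.e., limsup_{x→∞} A(x)/x > 0. -/

import Mathlib

open Filter

/-- Counting function: number of elements of `A` that are at most `x`. -/
noncomputable def cnt (A : Set ℕ) (x : ℕ) : ℕ := {a ∈ A | a ≤ x}.ncard

/-- `(A, B)` are multiplicative complements of order 2: both are sets of positive
integers and every positive integer is a product `a * b` with `a ∈ A`, `b ∈ B`. -/
def MC2 (A B : Set ℕ) : Prop :=
  A ⊆ {n | 0 < n} ∧ B ⊆ {n | 0 < n} ∧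
    ∀ n : ℕ, 0 < n → ∃ a ∈ A, ∃ b ∈ B, n = a * b

/-!
Every `n ≤ x` is `a * b` with `a ∈ A`, `b ∈ B`, `a ≤ x / b`, so `x ≤ ∑_{b ∈ B, b ≤ x} A(x / b)`.
By summability there is a finite set `S` outside of which the reciprocals of `B` add up to at
most `1/2`. The terms with `b ∉ S` contribute at most `x ∑ 1/b ≤ x/2` (using `A(y) ≤ y`), and
those with `b ∈ S` at most `|S| A(x)`. Hence `A(x) ≥ x / (2|S| + 1)` for every `x`.
-/

open Finset

lemma cnt_eq_card_filter (A : Set ℕ) [DecidablePred (· ∈ A)] (x : ℕ) :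
    cnt A x = #{a ∈ Iic x | a ∈ A} := by
  rw [cnt, ← Set.ncard_coe_finset]
  congr 1
  ext a
  simp [and_comm]

lemma cnt_mono (A : Set ℕ) : Monotone (cnt A) := by
  classical
  intro x y hxy
  simp only [cnt_eq_card_filter]
  exact card_le_card (filter_subset_filter _ (Iic_subset_Iic.2 hxy))

lemma cnt_le_self {A : Set ℕ} (hA : 0 ∉ A) (x : ℕ) : cnt A x ≤ x := by
  classical
  rw [cnt_eq_card_filter]
  calc #{a ∈ Iic x | a ∈ A} ≤ #(Icc 1 x) := by
        refine card_le_card fun a ha => ?_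
        obtain ⟨hax, haA⟩ := mem_filter.1 ha
        have : a ≠ 0 := by rintro rfl; exact hA haA
        exact mem_Icc.2 ⟨Nat.one_le_iff_ne_zero.2 this, mem_Iic.1 hax⟩
    _ = x := by simp

lemma le_sum_cnt_div {A B : Set ℕ} [DecidablePred (· ∈ B)]
    (hcov : ∀ n : ℕ, 0 < n → ∃ a ∈ A, ∃ b ∈ B, n = a * b) (x : ℕ) :
    x ≤ ∑ b ∈ Iic x with b ∈ B, cnt A (x / b) := by
  classical
  have hcover : Icc 1 x ⊆ ({b ∈ Iic x | b ∈ B} : Finset ℕ).biUnion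
      fun b => {a ∈ Iic (x / b) | a ∈ A}.image (· * b) := by
    intro n hn
    obtain ⟨hn1, hnx⟩ := mem_Icc.1 hn
    obtain ⟨a, ha, b, hb, rfl⟩ := hcov n hn1
    have hb0 : 0 < b := Nat.pos_of_mul_pos_left hn1
    have hbx : b ≤ x := (Nat.le_mul_of_pos_left b (Nat.pos_of_mul_pos_right hn1)).trans hnx
    simp only [mem_biUnion, mem_image, mem_filter, mem_Iic]
    exact ⟨b, ⟨hbx, hb⟩, a, ⟨(Nat.le_div_iff_mul_le hb0).2 hnx, ha⟩, rfl⟩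
  calc x = #(Icc 1 x) := by simp
    _ ≤ _ := card_le_card hcover
    _ ≤ _ := card_biUnion_le
    _ ≤ ∑ b ∈ Iic x with b ∈ B, cnt A (x / b) := by
      gcongr with b
      rw [cnt_eq_card_filter]
      exact card_image_le

lemma exists_finset_le_card_mul_cnt_add_half {A B : Set ℕ} (hA : 0 ∉ A)
    (hcov : ∀ n : ℕ, 0 < n → ∃ a ∈ A, ∃ b ∈ B, n = a * b)
    (hsum : Summable (fun b : B => (1 : ℝ) / ((b : ℕ) : ℝ))) :
    ∃ S : Finset ℕ, ∀ x : ℕ, (x : ℝ) ≤ #S * cnt A x + x / 2 := by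
  classical
  set f : ℕ → ℝ := B.indicator fun b => 1 / (b : ℝ)
  have hf : Summable f := summable_subtype_iff_indicator.1 hsum
  obtain ⟨S, hS⟩ := hf.vanishing (Iio_mem_nhds (by norm_num : (0 : ℝ) < 1 / 2))
  refine ⟨S, fun x => ?_⟩
  set Bx : Finset ℕ := {b ∈ Iic x | b ∈ B}
  have hsmall : ∑ b ∈ Bx ∩ S, (cnt A (x / b) : ℝ) ≤ #S * cnt A x :=
    calc ∑ b ∈ Bx ∩ S, (cnt A (x / b) : ℝ) ≤ ∑ _b ∈ Bx ∩ S, (cnt A x : ℝ) := by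
          gcongr with b
          exact cnt_mono A (Nat.div_le_self x b)
      _ ≤ #S * cnt A x := by
          rw [sum_const, nsmul_eq_mul]
          gcongr
          exact inter_subset_right
  have hlarge : ∑ b ∈ Bx \ S, (cnt A (x / b) : ℝ) ≤ x / 2 :=
    calc ∑ b ∈ Bx \ S, (cnt A (x / b) : ℝ) ≤ ∑ b ∈ Bx \ S, x * f b := by
          refine sum_le_sum fun b hb => ?_
          have hbB : b ∈ B := (mem_filter.1 (mem_sdiff.1 hb).1).2
          calc (cnt A (x / b) : ℝ) ≤ ((x / b : ℕ) : ℝ) := by exact_mod_cast cnt_le_self hA _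
            _ ≤ x / b := Nat.cast_div_le
            _ = x * f b := by rw [show f b = 1 / b from Set.indicator_of_mem hbB _, mul_one_div]
      _ ≤ x * (1 / 2) := by
          rw [← mul_sum]
          exact mul_le_mul_of_nonneg_left (hS _ disjoint_sdiff_self_left).le (by positivity)
      _ = x / 2 := by ring
  calc (x : ℝ) ≤ ∑ b ∈ Bx, (cnt A (x / b) : ℝ) := by exact_mod_cast le_sum_cnt_div hcov x
    _ = _ := (sum_inter_add_sum_sdiff Bx S _).symm
    _ ≤ _ := add_le_add hsmall hlarge

lemma exists_pos_mul_le_cnt {A B : Set ℕ} (hA : 0 ∉ A)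
    (hcov : ∀ n : ℕ, 0 < n → ∃ a ∈ A, ∃ b ∈ B, n = a * b)
    (hsum : Summable (fun b : B => (1 : ℝ) / ((b : ℕ) : ℝ))) :
    ∃ c : ℝ, 0 < c ∧ ∀ x : ℕ, c * x ≤ cnt A x := by
  obtain ⟨S, hS⟩ := exists_finset_le_card_mul_cnt_add_half hA hcov hsum
  refine ⟨1 / (2 * #S + 1), by positivity, fun x => ?_⟩
  rw [div_mul_eq_mul_div, one_mul, div_le_iff₀ (by positivity)]
  linarith [hS x, (Nat.cast_nonneg (cnt A x) : (0 : ℝ) ≤ _)]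

theorem stmt_14 (A B : Set ℕ) (hAB : MC2 A B)
    (hsum : Summable (fun b : B => (1 : ℝ) / ((b : ℕ) : ℝ))) :
    ¬ (fun x : ℕ => (cnt A x : ℝ)) =o[Filter.atTop] (fun x : ℕ => (x : ℝ)) ∧
      0 < Filter.limsup (fun x : ℕ => (cnt A x : ℝ) / (x : ℝ)) Filter.atTop := by
  obtain ⟨hApos, -, hcov⟩ := hAB
  have hA : 0 ∉ A := fun h => lt_irrefl 0 (hApos h)
  obtain ⟨c, hc, hcx⟩ := exists_pos_mul_le_cnt hA hcov hsum
  have hlower : ∀ᶠ x : ℕ in atTop, c ≤ (cnt A x : ℝ) / x :=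
    eventually_atTop.2 ⟨1, fun x hx => (le_div_iff₀ (by exact_mod_cast hx)).2 (hcx x)⟩
  have hupper : ∀ x : ℕ, (cnt A x : ℝ) / x ≤ 1 := fun x =>
    div_le_one_of_le₀ (by exact_mod_cast cnt_le_self hA x) (Nat.cast_nonneg x)
  refine ⟨fun ho => hc.not_ge (ge_of_tendsto ho.tendsto_div_nhds_zero hlower), ?_⟩
  exact hc.trans_le (le_limsup_of_frequently_le hlower.frequently (isBoundedUnder_of ⟨1, hupper⟩))
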